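/- For the generalized W state |W⟩ = √α₀|001⟩ + √α₁|010⟩ + √(1−α₀−α₁)|100⟩ with α₀, α₁ > 0 and α₀+α₁ < 1, the four 2×2 blocks Q_B^{(ij)} = ⟨i|_A (tr_C |W⟩⟨W|) |j⟩_A (i,j ∈ {0,1}) are linearly independent and hence form a basis of C^{2×2}; consequently |W⟩⟨W| is a virtual quantum Markov chain. -/
import Mathlib


open Matrix BigOperators
open scoped ComplexOrder

/-- The block `Q_BC^(ij) = ⟨i|_A ρ_ABC |j⟩_A` of a tripartite operator. -/
noncomputable def QBC {dA dB dC : ℕ}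
    (ρ : Matrix (Fin dA × Fin dB × Fin dC) (Fin dA × Fin dB × Fin dC) ℂ)
    (i j : Fin dA) : Matrix (Fin dB × Fin dC) (Fin dB × Fin dC) ℂ :=
  Matrix.of fun bc bc' => ρ (i, bc.1, bc.2) (j, bc'.1, bc'.2)

/-- The block `Q_B^(ij) = ⟨i|_A (tr_C ρ_ABC) |j⟩_A`. -/
noncomputable def QB {dA dB dC : ℕ}
    (ρ : Matrix (Fin dA × Fin dB × Fin dC) (Fin dA × Fin dB × Fin dC) ℂ)
    (i j : Fin dA) : Matrix (Fin dB) (Fin dB) ℂ :=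
  Matrix.of fun b b' => ∑ c : Fin dC, ρ (i, b, c) (j, b', c)

/-- A linear, Hermitian-preserving and trace-preserving map from system `B` to `B ⊗ C`. -/
def IsHPTP {dB dC : ℕ}
    (R : Matrix (Fin dB) (Fin dB) ℂ → Matrix (Fin dB × Fin dC) (Fin dB × Fin dC) ℂ) : Prop :=
  IsLinearMap ℂ R ∧ (∀ M, R Mᴴ = (R M)ᴴ) ∧ (∀ M, (R M).trace = M.trace)

/-- The virtual quantum Markov chain criterion `ker [Q_B] ⊆ ker [Q_BC]`. -/
def IsVQMC {dA dB dC : ℕ}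
    (ρ : Matrix (Fin dA × Fin dB × Fin dC) (Fin dA × Fin dB × Fin dC) ℂ) : Prop :=
  ∀ c : Fin dA → Fin dA → ℂ,
    (∑ i, ∑ j, c i j • QB ρ i j) = 0 → (∑ i, ∑ j, c i j • QBC ρ i j) = 0

/-- Outer product `|v⟩⟨v|` of a three-qubit vector. -/
noncomputable def outer (v : Fin 2 × Fin 2 × Fin 2 → ℂ) :
    Matrix (Fin 2 × Fin 2 × Fin 2) (Fin 2 × Fin 2 × Fin 2) ℂ :=
  Matrix.of fun x y => v x * star (v y)

/-- The generalized W state `√α₀|001⟩ + √α₁|010⟩ + √(1-α₀-α₁)|100⟩`. -/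
noncomputable def genW (α₀ α₁ : ℝ) : Fin 2 × Fin 2 × Fin 2 → ℂ :=
  fun x =>
    if x = (0,0,1) then (Real.sqrt α₀ : ℂ)
    else if x = (0,1,0) then (Real.sqrt α₁ : ℂ)
    else if x = (1,0,0) then (Real.sqrt (1 - α₀ - α₁) : ℂ)
    else 0

lemma genW_key (α₀ α₁ : ℝ) (h₀ : 0 < α₀) (h₁ : 0 < α₁) (hs : α₀ + α₁ < 1)
    (c : Fin 2 → Fin 2 → ℂ)
    (h : (∑ i, ∑ j, c i j • QB (outer (genW α₀ α₁)) i j) = 0) :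
    ∀ i j, c i j = 0 := by
  have hγ : 0 < 1 - α₀ - α₁ := by linarith
  have E : ∀ b b' : Fin 2, (∑ i, ∑ j, c i j • QB (outer (genW α₀ α₁)) i j) b b' = 0 := by
    intro b b'; rw [h]; rfl
  have e10 := E 1 0
  have e01 := E 0 1
  have e11 := E 1 1
  have e00 := E 0 0
  simp [QB, outer, genW, Fin.sum_univ_two, Matrix.sum_apply, Prod.ext_iff] at e10 e01 e11 e00
  have hsa : Real.sqrt α₀ ≠ 0 := Real.sqrt_ne_zero'.2 h₀
  have hsb : Real.sqrt α₁ ≠ 0 := Real.sqrt_ne_zero'.2 h₁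
  have hsc : Real.sqrt (1 - α₀ - α₁) ≠ 0 := Real.sqrt_ne_zero'.2 hγ
  have h01 : c 0 1 = 0 := by tauto
  have h10 : c 1 0 = 0 := by tauto
  have h00 : c 0 0 = 0 := by tauto
  have hcγ : (Real.sqrt (1 - α₀ - α₁) : ℂ) ≠ 0 := by exact_mod_cast hsc
  have h11 : c 1 1 = 0 := by
    rw [h00, zero_mul, zero_add] at e00
    exact (mul_eq_zero.1 e00).resolve_right (mul_ne_zero hcγ hcγ)
  intro i j; fin_cases i <;> fin_cases j <;> assumption

/-- for `α₀, α₁ > 0` with `α₀ + α₁ < 1`, the four blocks `Q_B^(ij)` of the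
generalized W state are linearly independent (hence a basis of `ℂ^{2×2}`), and the state
is a virtual quantum Markov chain. -/
theorem genW_blocks_linearIndependent_and_vqmc (α₀ α₁ : ℝ)
    (h₀ : 0 < α₀) (h₁ : 0 < α₁) (hs : α₀ + α₁ < 1) :
    LinearIndependent ℂ (fun p : Fin 2 × Fin 2 => QB (outer (genW α₀ α₁)) p.1 p.2) ∧
    IsVQMC (outer (genW α₀ α₁)) := by
  constructor
  · rw [Fintype.linearIndependent_iff]
    intro g hg p
    have := genW_key α₀ α₁ h₀ h₁ hs (fun i j => g (i, j)) (by
      rw [← hg]; rw [Fintype.sum_prod_type])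
    exact this p.1 p.2
  · intro c hc
    have := genW_key α₀ α₁ h₀ h₁ hs c hc
    simp [this]
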